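/- If m ≥ n ≥ c ≥ 1, then Pr[E₁] ≥ 1 − 6c·exp(−cn/(10(m+n+2c))), where Pr is over a uniformly random valid assignment π. -/

import Mathlib

open Finset

/-- Labels for agents: old buyer, new buyer, old seller, new seller. -/
inductive Label : Type
  | BO | BN | SO | SN
deriving DecidableEq

instance : Fintype Label :=
  ⟨{.BO, .BN, .SO, .SN}, fun x => by cases x <;> decide⟩

/-- Total number of agents: `m` old buyers, `n` old sellers, `c` new buyers and `c` new
sellers. -/
def NN (m n c : ℕ) : ℕ := m + n + 2 * c

/-- The set of indices carrying a given label under the assignment `π`. -/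
def labelSet (m n c : ℕ) (L : Label) (π : Fin (NN m n c) → Label) :
    Finset (Fin (NN m n c)) :=
  Finset.univ.filter (fun i => π i = L)

/-- Valid assignments: exactly `m` old buyers, `c` new buyers, `n` old sellers and
`c` new sellers. -/
def validAssignments (m n c : ℕ) : Finset (Fin (NN m n c) → Label) :=
  Finset.univ.filter (fun π =>
    (labelSet m n c .BO π).card = m ∧ (labelSet m n c .BN π).card = c ∧
    (labelSet m n c .SO π).card = n ∧ (labelSet m n c .SN π).card = c)

/-- `p = ⌈n/10⌉`. -/
def pVal (n : ℕ) : ℕ := (n + 9) / 10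

/-- `I₁`: the indices of the top `p` quantiles (1-based indices `{1,…,p}`). -/
def I1 (m n c : ℕ) : Finset (Fin (NN m n c)) :=
  Finset.univ.filter (fun i => (i : ℕ) < pVal n)

/-- `I₂`: 1-based indices `{p+1,…,2p}`. -/
def I2 (m n c : ℕ) : Finset (Fin (NN m n c)) :=
  Finset.univ.filter (fun i => pVal n ≤ (i : ℕ) ∧ (i : ℕ) < 2 * pVal n)

/-- `J₁`: 1-based indices `{N-p+1,…,N}`. -/
def J1 (m n c : ℕ) : Finset (Fin (NN m n c)) :=
  Finset.univ.filter (fun i => NN m n c - pVal n ≤ (i : ℕ))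

/-- `J₂`: 1-based indices `{N-2p+1,…,N-p}`. -/
def J2 (m n c : ℕ) : Finset (Fin (NN m n c)) :=
  Finset.univ.filter (fun i =>
    NN m n c - 2 * pVal n ≤ (i : ℕ) ∧ (i : ℕ) < NN m n c - pVal n)

/-- The good event `E₁`: at least 2 new buyers in `I₁`, at least 1 old buyer in `I₂`,
at least 2 new sellers in `J₁`, at least 1 old seller in `J₂`. -/
def E1 (m n c : ℕ) : Finset (Fin (NN m n c) → Label) :=
  (validAssignments m n c).filter (fun π =>
    2 ≤ (I1 m n c ∩ labelSet m n c .BN π).card ∧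
    1 ≤ (I2 m n c ∩ labelSet m n c .BO π).card ∧
    2 ≤ (J1 m n c ∩ labelSet m n c .SN π).card ∧
    1 ≤ (J2 m n c ∩ labelSet m n c .SO π).card)

/-- The bad event `E₂`: `E₁` fails and all new sellers are among the top `2n + 2c`
indices. -/
def E2 (m n c : ℕ) : Finset (Fin (NN m n c) → Label) :=
  (validAssignments m n c).filter (fun π =>
    π ∉ E1 m n c ∧ ∀ i ∈ labelSet m n c .SN π, (i : ℕ) < 2 * n + 2 * c)

/-- The probability of an event under a uniformly random valid assignment. -/
noncomputable def prOf (m n c : ℕ) (E : Finset (Fin (NN m n c) → Label)) : ℝ :=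
  (E.card : ℝ) / (validAssignments m n c).card

/-!
Permuting positions maps valid assignments to valid assignments, so for each label the set of
positions carrying it is a uniformly random subset of its quota size `q`. Each of the four
windows has `p = ⌈n/10⌉` positions, so such a subset misses a given window with probability
`C(N - p, q) / C(N, q) ≤ (1 - p/N)^q ≤ exp(-pq/N)`, and meets it at most once with probability
at most `(1 + q)` times that. Since `q ≥ c` for every label and `p ≥ n/10`, the two windows that
need one old agent fail with probability at most `exp(-cn/(10N))` each and the two that need two
new agents (`q = c`) with probability at most `2c·exp(-cn/(10N))` each; a union bound finishes.
-/

theorem Nat.choose_sub_mul_pow_le (N p q : ℕ) :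
    (N - p).choose q * N ^ q ≤ N.choose q * (N - p) ^ q := by
  have hdesc : (N - p).descFactorial q * N ^ q ≤ N.descFactorial q * (N - p) ^ q := by
    rw [Nat.descFactorial_eq_prod_range, Nat.descFactorial_eq_prod_range, pow_eq_prod_const,
      pow_eq_prod_const, ← prod_mul_distrib, ← prod_mul_distrib]
    refine prod_le_prod' fun i _ => ?_
    -- termwise `(N - p - i) / (N - i) ≤ (N - p) / N`
    rw [Nat.sub_mul (N - p) i N, Nat.sub_mul N i (N - p), Nat.mul_comm (N - p) N]
    exact Nat.sub_le_sub_left (Nat.mul_le_mul_left i (Nat.sub_le N p)) _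
  rw [Nat.descFactorial_eq_factorial_mul_choose, Nat.descFactorial_eq_factorial_mul_choose,
    mul_assoc, mul_assoc] at hdesc
  exact Nat.le_of_mul_le_mul_left hdesc (Nat.factorial_pos q)

theorem Nat.mul_choose_le_succ_mul_choose_succ {p M q : ℕ} (h : p + q ≤ M) :
    p * M.choose q ≤ (q + 1) * M.choose (q + 1) := by
  rw [mul_comm, mul_comm (q + 1), Nat.choose_succ_right_eq]
  exact Nat.mul_le_mul_left _ (by omega)

theorem Nat.cast_choose_sub_le_mul_exp {N p : ℕ} (hpN : p ≤ N) (q : ℕ) :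
    ((N - p).choose q : ℝ) ≤ N.choose q * Real.exp (-(p * q) / N) := by
  rcases N.eq_zero_or_pos with rfl | hN
  · obtain rfl : p = 0 := by omega
    simp
  have hNr : (0 : ℝ) < N := by exact_mod_cast hN
  have hbase : (0 : ℝ) ≤ 1 - p / N := by
    rw [sub_nonneg, div_le_one hNr]; exact_mod_cast hpN
  have hratio : ((N - p).choose q : ℝ) ≤ N.choose q * (1 - p / N) ^ q := by
    rw [← mul_le_mul_iff_of_pos_right (pow_pos hNr q), mul_assoc, ← mul_pow,
      one_sub_mul, div_mul_cancel₀ _ hNr.ne', ← Nat.cast_sub hpN]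
    exact_mod_cast Nat.choose_sub_mul_pow_le N p q
  calc ((N - p).choose q : ℝ) ≤ N.choose q * (1 - p / N) ^ q := hratio
    _ ≤ N.choose q * Real.exp (-(p / N)) ^ q := by
      gcongr
      linarith [Real.add_one_le_exp (-(p / N : ℝ))]
    _ = N.choose q * Real.exp (-(p * q) / N) := by
      rw [← Real.exp_nat_mul]; congr 2; ring

section SubsetCounting

variable {α : Type*} [Fintype α] [DecidableEq α]

theorem card_powersetCard_filter_card_inter_eq_le (W : Finset α) (q j : ℕ) :
    #{S ∈ powersetCard q univ | #(W ∩ S) = j} ≤ (#W).choose j * (#Wᶜ).choose (q - j) := by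
  rw [← card_powersetCard, ← card_powersetCard, ← card_product]
  refine card_le_card_of_injOn (fun S => (W ∩ S, S \ W)) ?_ ?_
  · intro S hS
    simp only [coe_filter, mem_powersetCard, subset_univ, true_and, Set.mem_ofPred_eq] at hS
    have hsplit := card_sdiff_add_card_inter S W
    rw [inter_comm] at hsplit
    simp only [coe_product, Set.mem_prod, mem_coe, mem_powersetCard]
    refine ⟨⟨inter_subset_left, hS.2⟩, fun x hx => ?_, by omega⟩
    simp [(mem_sdiff.1 hx).2]
  · intro S _ T _ hST
    simp only [Prod.mk.injEq] at hST
    rw [← sdiff_union_inter S W, ← sdiff_union_inter T W, inter_comm S, inter_comm T,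
      hST.1, hST.2]

theorem card_powersetCard_filter_card_inter_lt_one_le (W : Finset α) (q : ℕ) :
    #{S ∈ powersetCard q univ | #(W ∩ S) < 1} ≤ (#Wᶜ).choose q := by
  simpa [Nat.lt_one_iff] using card_powersetCard_filter_card_inter_eq_le W q 0

theorem card_powersetCard_filter_card_inter_lt_two_le (W : Finset α) (q : ℕ) :
    #{S ∈ powersetCard q univ | #(W ∩ S) < 2} ≤
      (#Wᶜ).choose q + #W * (#Wᶜ).choose (q - 1) := by
  have hsplit : {S ∈ powersetCard q (univ : Finset α) | #(W ∩ S) < 2} ⊆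
      {S ∈ powersetCard q (univ : Finset α) | #(W ∩ S) = 0} ∪
        {S ∈ powersetCard q (univ : Finset α) | #(W ∩ S) = 1} := by
    intro S hS
    simp only [mem_filter, mem_union] at hS ⊢
    rcases Nat.lt_succ_iff_lt_or_eq.1 hS.2 with h | h
    · exact Or.inl ⟨hS.1, Nat.lt_one_iff.1 h⟩
    · exact Or.inr ⟨hS.1, h⟩
  calc _ ≤ _ := card_le_card hsplit
    _ ≤ _ := card_union_le _ _
    _ ≤ _ := by
      gcongr
      · simpa using card_powersetCard_filter_card_inter_eq_le W q 0
      · simpa using card_powersetCard_filter_card_inter_eq_le W q 1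

end SubsetCounting

theorem exists_card_fiber_eq {α β : Type*} [Fintype α] [Fintype β] [DecidableEq β]
    (k : β → ℕ) (hk : ∑ b, k b = Fintype.card α) :
    ∃ π : α → β, ∀ b, #(univ.filter (π · = b)) = k b := by
  let e : α ≃ Σ b, Fin (k b) := Fintype.equivOfCardEq (by simp [hk])
  refine ⟨fun i => (e i).1, fun b => ?_⟩
  calc #(univ.filter fun i => (e i).1 = b)
      = #(univ.filter fun x : Σ b, Fin (k b) => x.1 = b) := card_equiv e (by simp)
    _ = #(({b} : Finset β).sigma fun b => (univ : Finset (Fin (k b)))) := by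
        congr 1; ext x; simp
    _ = k b := by simp

def IsPermInvariant {α β : Type*} (V : Finset (α → β)) : Prop :=
  ∀ σ : Equiv.Perm α, ∀ π ∈ V, π ∘ σ ∈ V

section PermInvariant

variable {α β : Type*} [Fintype α] [DecidableEq α] [DecidableEq β] {V : Finset (α → β)}

theorem card_filter_fiber_eq_le (hV : IsPermInvariant V) (b : β)
    {S T : Finset α} (hST : #S = #T) :
    #{π ∈ V | univ.filter (π · = b) = S} ≤ #{π ∈ V | univ.filter (π · = b) = T} := by
  let e : {i // i ∈ T} ≃ {i // i ∈ S} := Fintype.equivOfCardEq (by simp [hST])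
  let σ : Equiv.Perm α := e.extendSubtype
  have hσ : ∀ i, σ i ∈ S ↔ i ∈ T := fun i =>
    ⟨not_imp_not.1 (e.extendSubtype_not_mem i), e.extendSubtype_mem i⟩
  refine card_le_card_of_injOn (· ∘ σ) (fun π hπ => ?_) fun π₁ _ π₂ _ h => ?_
  · simp only [coe_filter, Set.mem_ofPred_eq] at hπ ⊢
    refine ⟨hV σ π hπ.1, ?_⟩
    ext i
    simp [← hσ i, ← hπ.2]
  · exact funext fun i => by simpa using congrFun h (σ.symm i)

theorem card_filter_fiber_eq (hV : IsPermInvariant V) (b : β)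
    {S T : Finset α} (hST : #S = #T) :
    #{π ∈ V | univ.filter (π · = b) = S} = #{π ∈ V | univ.filter (π · = b) = T} :=
  (card_filter_fiber_eq_le hV b hST).antisymm (card_filter_fiber_eq_le hV b hST.symm)

/-- The fibre over `b` of a uniformly random element of `V` is a uniformly random
`q`-subset of `α`. -/
theorem card_filter_fiber_mul_choose (hV : IsPermInvariant V) (b : β)
    {q : ℕ} (hq : ∀ π ∈ V, #(univ.filter (π · = b)) = q)
    (P : Finset α → Prop) [DecidablePred P] :
    #{π ∈ V | P (univ.filter (π · = b))} * (Fintype.card α).choose q =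
      #{S ∈ powersetCard q univ | P S} * #V := by
  rcases V.eq_empty_or_nonempty with rfl | ⟨π₀, hπ₀⟩
  · simp
  set K := #{π ∈ V | univ.filter (π · = b) = univ.filter (π₀ · = b)}
  have hfiber : ∀ S ∈ powersetCard q univ, #{π ∈ V | univ.filter (π · = b) = S} = K :=
    fun S hS => card_filter_fiber_eq hV b ((mem_powersetCard.1 hS).2.trans (hq π₀ hπ₀).symm)
  have hmaps : ∀ π ∈ V, (univ.filter (π · = b)) ∈ powersetCard q univ := fun π hπ =>
    mem_powersetCard.2 ⟨subset_univ _, hq π hπ⟩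
  have hV_card : #V = (Fintype.card α).choose q * K := by
    rw [card_eq_sum_card_fiberwise hmaps, sum_congr rfl hfiber, sum_const, card_powersetCard,
      card_univ, smul_eq_mul]
  have hP_card :
      #{π ∈ V | P (univ.filter (π · = b))} = #{S ∈ powersetCard q univ | P S} * K := by
    rw [card_eq_sum_card_fiberwise (t := {S ∈ powersetCard q univ | P S})
      (fun π hπ => mem_filter.2 ⟨hmaps π (mem_filter.1 hπ).1, (mem_filter.1 hπ).2⟩),
      ← smul_eq_mul, ← sum_const]
    refine sum_congr rfl fun S hS => ?_
    rw [← hfiber S (mem_filter.1 hS).1, filter_filter]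
    congr 1
    refine filter_congr fun π _ => ⟨And.right, fun h => ⟨h ▸ (mem_filter.1 hS).2, h⟩⟩
  rw [hP_card, hV_card]
  ring

theorem card_filter_fiber_le_mul_card (hV : IsPermInvariant V) (b : β)
    {q : ℕ} (hq : ∀ π ∈ V, #(univ.filter (π · = b)) = q)
    (P : Finset α → Prop) [DecidablePred P] {r : ℝ}
    (hP : (#{S ∈ powersetCard q univ | P S} : ℝ) ≤ r * (Fintype.card α).choose q) :
    (#{π ∈ V | P (univ.filter (π · = b))} : ℝ) ≤ r * #V := by
  rcases V.eq_empty_or_nonempty with rfl | ⟨π₀, hπ₀⟩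
  · simp
  have hchoose : (0 : ℝ) < (Fintype.card α).choose q := by
    exact_mod_cast Nat.choose_pos (hq π₀ hπ₀ ▸ card_le_univ _)
  have hmarginal : (#{π ∈ V | P (univ.filter (π · = b))} : ℝ) * (Fintype.card α).choose q =
      #{S ∈ powersetCard q univ | P S} * #V := by
    exact_mod_cast card_filter_fiber_mul_choose hV b hq P
  rw [← mul_le_mul_iff_of_pos_right hchoose, hmarginal]
  calc _ ≤ r * (Fintype.card α).choose q * #V := by gcongr
    _ = _ := by ring

theorem card_filter_card_inter_fiber_lt_one_le (hV : IsPermInvariant V)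
    (b : β) {q : ℕ} (hq : ∀ π ∈ V, #(univ.filter (π · = b)) = q) (W : Finset α) :
    (#{π ∈ V | #(W ∩ univ.filter (π · = b)) < 1} : ℝ) ≤
      Real.exp (-(#W * q) / Fintype.card α) * #V := by
  refine card_filter_fiber_le_mul_card hV b hq (fun S => #(W ∩ S) < 1) ?_
  calc (#{S ∈ powersetCard q univ | #(W ∩ S) < 1} : ℝ) ≤ (#Wᶜ).choose q := by
        exact_mod_cast card_powersetCard_filter_card_inter_lt_one_le W q
    _ ≤ _ := by
      rw [card_compl, mul_comm]
      exact Nat.cast_choose_sub_le_mul_exp (card_le_univ W) q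

theorem card_filter_card_inter_fiber_lt_two_le (hV : IsPermInvariant V)
    (b : β) {q : ℕ} (hq : ∀ π ∈ V, #(univ.filter (π · = b)) = q) (hq₁ : 1 ≤ q)
    (W : Finset α) (hW : 2 * #W + q ≤ Fintype.card α + 1) :
    (#{π ∈ V | #(W ∩ univ.filter (π · = b)) < 2} : ℝ) ≤
      2 * q * Real.exp (-(#W * q) / Fintype.card α) * #V := by
  refine card_filter_fiber_le_mul_card hV b hq (fun S => #(W ∩ S) < 2) ?_
  obtain ⟨q, rfl⟩ : ∃ k, q = k + 1 := ⟨q - 1, by omega⟩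
  have hcount : #{S ∈ powersetCard (q + 1) univ | #(W ∩ S) < 2} ≤
      2 * (q + 1) * (Fintype.card α - #W).choose (q + 1) :=
    calc _ ≤ (#Wᶜ).choose (q + 1) + #W * (#Wᶜ).choose q :=
          card_powersetCard_filter_card_inter_lt_two_le W (q + 1)
      _ ≤ (Fintype.card α - #W).choose (q + 1) +
            (q + 1) * (Fintype.card α - #W).choose (q + 1) := by
          rw [card_compl]
          exact Nat.add_le_add_left (Nat.mul_choose_le_succ_mul_choose_succ (by omega)) _
      _ ≤ _ := by nlinarith
  calc (#{S ∈ powersetCard (q + 1) univ | #(W ∩ S) < 2} : ℝ)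
      ≤ 2 * (q + 1 : ℕ) * ((Fintype.card α - #W).choose (q + 1) : ℝ) := by
        exact_mod_cast hcount
    _ ≤ 2 * (q + 1 : ℕ) * ((Fintype.card α).choose (q + 1) *
          Real.exp (-(#W * (q + 1 : ℕ)) / Fintype.card α)) := by
        gcongr
        exact Nat.cast_choose_sub_le_mul_exp (card_le_univ W) (q + 1)
    _ = _ := by ring

end PermInvariant

theorem Fin.card_filter_le_and_lt {N : ℕ} (a : ℕ) {b : ℕ} (hb : b ≤ N) :
    #{i : Fin N | a ≤ i ∧ i < b} = b - a := by
  rw [← Nat.card_Ico, ← card_attachFin (Ico a b) (fun x hx => (mem_Ico.1 hx).2.trans_le hb)]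
  congr 1
  ext i
  simp

theorem isPermInvariant_validAssignments (m n c : ℕ) :
    IsPermInvariant (validAssignments m n c) := by
  intro σ π hπ
  have hlabel : ∀ L, #(labelSet m n c L (π ∘ σ)) = #(labelSet m n c L π) := fun L =>
    card_equiv σ (by simp [labelSet])
  simpa [validAssignments, hlabel] using hπ

theorem validAssignments_nonempty (m n c : ℕ) : (validAssignments m n c).Nonempty := by
  let quota : Label → ℕ
    | .BO => m | .BN => c | .SO => n | .SN => c
  obtain ⟨π, hπ⟩ := exists_card_fiber_eq (α := Fin (NN m n c)) quota <| by
    rw [Fintype.card_fin]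
    change ∑ b ∈ {.BO, .BN, .SO, .SN}, quota b = _
    simp [quota, NN]
    ring
  exact ⟨π, mem_filter.2 ⟨mem_univ _, hπ .BO, hπ .BN, hπ .SO, hπ .SN⟩⟩

section Assignments

variable {m n c : ℕ}

theorem n_le_ten_mul_pVal : n ≤ 10 * pVal n := by
  unfold pVal; omega

theorem two_mul_pVal_le_NN (hc : 1 ≤ c) : 2 * pVal n ≤ NN m n c := by
  unfold pVal NN; omega

theorem card_I1 (h : pVal n ≤ NN m n c) : #(I1 m n c) = pVal n := by
  simp only [I1, Fin.card_filter_val_lt]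
  omega

theorem card_I2 (h : 2 * pVal n ≤ NN m n c) : #(I2 m n c) = pVal n := by
  rw [I2, Fin.card_filter_le_and_lt _ h]
  omega

theorem card_J1 (h : pVal n ≤ NN m n c) : #(J1 m n c) = pVal n := by
  have hJ1 : J1 m n c = ({i | NN m n c - pVal n ≤ i ∧ i < NN m n c} : Finset (Fin _)) :=
    filter_congr fun i _ => by simp [i.isLt]
  rw [hJ1, Fin.card_filter_le_and_lt _ le_rfl]
  omega

theorem card_J2 (h : 2 * pVal n ≤ NN m n c) : #(J2 m n c) = pVal n := by
  rw [J2, Fin.card_filter_le_and_lt _ (Nat.sub_le _ _)]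
  omega

theorem exp_neg_pVal_mul_div_le {q : ℕ} (hcq : c ≤ q) :
    Real.exp (-((pVal n : ℕ) * q) / Fintype.card (Fin (NN m n c))) ≤
      Real.exp (-(c * n) / (10 * (m + n + 2 * c))) := by
  have hcn : (c * n : ℝ) ≤ 10 * (pVal n * q) := by
    exact_mod_cast (Nat.mul_le_mul hcq n_le_ten_mul_pVal).trans_eq (by ring)
  rw [Real.exp_le_exp, Fintype.card_fin, NN, neg_div, neg_div, neg_le_neg_iff, ← div_div]
  push_cast
  exact div_le_div_of_nonneg_right (by linarith) (by positivity)

theorem card_filter_card_inter_labelSet_lt_two_le (hc : 1 ≤ c) {L : Label}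
    (hL : ∀ π ∈ validAssignments m n c, #(labelSet m n c L π) = c)
    {W : Finset (Fin (NN m n c))} (hW : #W = pVal n) :
    (#{π ∈ validAssignments m n c | #(W ∩ labelSet m n c L π) < 2} : ℝ) ≤
      2 * c * Real.exp (-(c * n) / (10 * (m + n + 2 * c))) * #(validAssignments m n c) := by
  have hWc : 2 * #W + c ≤ Fintype.card (Fin (NN m n c)) + 1 := by
    rw [hW, Fintype.card_fin]; unfold pVal NN; omega
  refine (card_filter_card_inter_fiber_lt_two_le (isPermInvariant_validAssignments m n c) L hL hc
    W hWc).trans ?_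
  rw [hW]
  gcongr 2 * c * ?_ * _
  exact exp_neg_pVal_mul_div_le le_rfl

theorem card_filter_card_inter_labelSet_lt_one_le {L : Label} {q : ℕ} (hcq : c ≤ q)
    (hL : ∀ π ∈ validAssignments m n c, #(labelSet m n c L π) = q)
    {W : Finset (Fin (NN m n c))} (hW : #W = pVal n) :
    (#{π ∈ validAssignments m n c | #(W ∩ labelSet m n c L π) < 1} : ℝ) ≤
      Real.exp (-(c * n) / (10 * (m + n + 2 * c))) * #(validAssignments m n c) := by
  refine (card_filter_card_inter_fiber_lt_one_le (isPermInvariant_validAssignments m n c) L hL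
    W).trans ?_
  rw [hW]
  gcongr ?_ * _
  exact exp_neg_pVal_mul_div_le hcq

theorem validAssignments_sdiff_E1 :
    validAssignments m n c \ E1 m n c =
      {π ∈ validAssignments m n c | #(I1 m n c ∩ labelSet m n c .BN π) < 2} ∪
      ({π ∈ validAssignments m n c | #(I2 m n c ∩ labelSet m n c .BO π) < 1} ∪
      ({π ∈ validAssignments m n c | #(J1 m n c ∩ labelSet m n c .SN π) < 2} ∪
      {π ∈ validAssignments m n c | #(J2 m n c ∩ labelSet m n c .SO π) < 1})) := by
  rw [E1, ← filter_not]
  simp only [← filter_or]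
  exact filter_congr fun π _ => by omega

theorem card_validAssignments_sdiff_E1_le (hc : 1 ≤ c) (hcn : c ≤ n) (hnm : n ≤ m) :
    (#(validAssignments m n c \ E1 m n c) : ℝ) ≤
      6 * c * Real.exp (-(c * n) / (10 * (m + n + 2 * c))) * #(validAssignments m n c) := by
  set V := validAssignments m n c
  set ε := Real.exp (-(c * n) / (10 * (m + n + 2 * c)))
  have hp₂ : 2 * pVal n ≤ NN m n c := two_mul_pVal_le_NN hc
  have hp₁ : pVal n ≤ NN m n c := by omega
  have hBN := card_filter_card_inter_labelSet_lt_two_le hc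
    (fun π hπ => (mem_filter.1 hπ).2.2.1) (card_I1 hp₁)
  have hBO := card_filter_card_inter_labelSet_lt_one_le (hcn.trans hnm)
    (fun π hπ => (mem_filter.1 hπ).2.1) (card_I2 hp₂)
  have hSN := card_filter_card_inter_labelSet_lt_two_le hc
    (fun π hπ => (mem_filter.1 hπ).2.2.2.2) (card_J1 hp₁)
  have hSO := card_filter_card_inter_labelSet_lt_one_le hcn
    (fun π hπ => (mem_filter.1 hπ).2.2.2.1) (card_J2 hp₂)
  have hunion : (#(V \ E1 m n c) : ℝ) ≤
      2 * c * ε * #V + (ε * #V + (2 * c * ε * #V + ε * #V)) := by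
    rw [validAssignments_sdiff_E1]
    refine (Nat.cast_le.2 (card_union_le _ _)).trans ?_
    push_cast
    gcongr
    refine (Nat.cast_le.2 (card_union_le _ _)).trans ?_
    push_cast
    gcongr
    refine (Nat.cast_le.2 (card_union_le _ _)).trans ?_
    push_cast
    gcongr
  have hεV : ε * #V ≤ c * (ε * #V) :=
    le_mul_of_one_le_left (by positivity) (by exact_mod_cast hc)
  linarith

end Assignments

/-- If `m ≥ n ≥ c ≥ 1`, then
`Pr[E₁] ≥ 1 − 6c·exp(−cn/(10(m+n+2c)))`. -/
theorem prE1_lower_bound (m n c : ℕ) (hc : 1 ≤ c) (hcn : c ≤ n) (hnm : n ≤ m) :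
    1 - 6 * (c : ℝ) *
        Real.exp (-((c : ℝ) * (n : ℝ)) / (10 * ((m : ℝ) + (n : ℝ) + 2 * (c : ℝ)))) ≤
      prOf m n c (E1 m n c) := by
  have hV : (0 : ℝ) < #(validAssignments m n c) := by
    exact_mod_cast (validAssignments_nonempty m n c).card_pos
  have hsub : E1 m n c ⊆ validAssignments m n c := filter_subset _ _
  have hE1 : (#(E1 m n c) : ℝ) =
      #(validAssignments m n c) - #(validAssignments m n c \ E1 m n c) := by
    rw [card_sdiff_of_subset hsub, Nat.cast_sub (card_le_card hsub)]
    ring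
  rw [prOf, le_div_iff₀ hV, hE1]
  linarith [card_validAssignments_sdiff_E1_le hc hcn hnm]
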